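/- Let γ : Z_n → ℕ and i ∈ {1,…,n}, and let −^a +^b be the reduced i-signature of γ. Then (γ^{i,+})^{i,−} = γ; and if a > 0, then (γ^{i,−})^{i,+} = γ. (These are the relations ẽ_i f̃_i = id and f̃_i ẽ_i = id, where defined, for the combinatorial crystal operators of type A_n.) -/

import Mathlib

/-!
Let `minusSuffix γ i k` be the number of '−' surviving in the reduced word of the blocks
`k, …, i` and `plusPrefix γ i k` the number of '+' surviving in the reduced word of the blocks
`1, …, k - 1`; both obey one-step recurrences in `k`.  The row `k'` moved by `γ^{i,+}` is the least
`k` whose '+' are not all cancelled by the '−' to their right (or `i`), and the row `k''` moved by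
`γ^{i,−}` is the largest `k` whose '−' are not all cancelled by the '+' to their left.
Moving one unit from `(k', i - 1)` to `(k', i)` leaves `plusPrefix` unchanged up to `k'` and lowers
it by at most one beyond `k'`, where the surviving '+' of the prefix strictly outnumber the
surviving '−' of the suffix; so no '−' beyond row `k'` survives and `k'` becomes the row `k''` of
the new function.  The second identity is the mirror image of this argument.
-/

/-- The two-letter alphabet {+,−}. -/
inductive Sign : Type
  | plus : Sign
  | minus : Sign
deriving DecidableEq

/-- Repeatedly delete adjacent pairs "+−" until none remain, producing the
reduced word −^a +^b (processing the word from the right). -/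
def sigReduce : List Sign → List Sign
  | [] => []
  | s :: w =>
    let t := sigReduce w
    if s = Sign.plus ∧ t.head? = some Sign.minus then t.tail else s :: t

/-- The block of the i-signature word contributed by the pairs (k,i) and
(k,i−1): γ(k,i) symbols '−' followed by γ(k,i−1) symbols '+'. -/
def sigBlock (γ : ℤ × ℤ → ℕ) (i k : ℤ) : List Sign :=
  List.replicate (γ (k, i)) Sign.minus ++ List.replicate (γ (k, i - 1)) Sign.plus

/-- The i-signature word w_i(γ): the blocks for k = 1, …, i listed in
increasing order of k. -/
def sigWord (γ : ℤ × ℤ → ℕ) (i : ℤ) : List Sign :=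
  ((List.range i.toNat).map fun j => sigBlock γ i (1 + j)).flatten

/-- The part of the i-signature word consisting of the blocks k, k+1, …, i. -/
def sigSuffix (γ : ℤ × ℤ → ℕ) (i k : ℤ) : List Sign :=
  ((List.range (i + 1 - k).toNat).map fun j => sigBlock γ i (k + j)).flatten

/-- The part of the i-signature word consisting of the blocks 1, …, k−1. -/
def sigPrefix (γ : ℤ × ℤ → ℕ) (i k : ℤ) : List Sign :=
  ((List.range (k - 1).toNat).map fun j => sigBlock γ i (1 + j)).flatten

/-- The number a of '−'s in the reduced i-signature −^a +^b of γ. -/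
def aCount (γ : ℤ × ℤ → ℕ) (i : ℤ) : ℕ :=
  (sigReduce (sigWord γ i)).count Sign.minus

/-- The number b of '+'s in the reduced i-signature −^a +^b of γ. -/
def bCount (γ : ℤ × ℤ → ℕ) (i : ℤ) : ℕ :=
  (sigReduce (sigWord γ i)).count Sign.plus

/-- The index k' such that the pair (k', i−1) contributes the leftmost
surviving '+' of the reduced i-signature of γ: a '+' from the block k survives
the cancellation precisely when γ(k,i−1) exceeds the number of '−'s in the
reduced word of the blocks k+1, …, i.  If there is no '+' in the reduced
i-signature, then k' = i. -/
noncomputable def kPlus (γ : ℤ × ℤ → ℕ) (i : ℤ) : ℤ :=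
  let S := (Finset.Icc (1 : ℤ) (i - 1)).filter fun k =>
    (sigReduce (sigSuffix γ i (k + 1))).count Sign.minus < γ (k, i - 1)
  if h : S.Nonempty then S.min' h else i

/-- The index k'' such that the pair (k'', i) contributes the rightmost
surviving '−' of the reduced i-signature of γ: a '−' from the block k survives
the cancellation precisely when γ(k,i) exceeds the number of '+'s in the
reduced word of the blocks 1, …, k−1.  (Meaningful when a > 0; otherwise the
value defaults to i.) -/
noncomputable def kMinus (γ : ℤ × ℤ → ℕ) (i : ℤ) : ℤ :=
  let S := (Finset.Icc (1 : ℤ) i).filter fun k =>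
    (sigReduce (sigPrefix γ i k)).count Sign.plus < γ (k, i)
  if h : S.Nonempty then S.max' h else i

/-- The operator γ ↦ γ^{i,+}: add 1 at (k',i) and subtract 1 at (k',i−1),
where (k',i−1) is the pair contributing the leftmost surviving '+' of the
reduced i-signature; if there is no such '+' then k' = i and only γ(i,i) is
increased by 1. -/
noncomputable def gammaPlus (γ : ℤ × ℤ → ℕ) (i : ℤ) : ℤ × ℤ → ℕ := fun p =>
  if p = (kPlus γ i, i) then γ p + 1
  else if kPlus γ i < i ∧ p = (kPlus γ i, i - 1) then γ p - 1
  else γ p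

/-- The operator γ ↦ γ^{i,−} (defined when a > 0): subtract 1 at (k'',i) and
add 1 at (k'',i−1), where (k'',i) is the pair contributing the rightmost
surviving '−' of the reduced i-signature; if k'' = i then only γ(i,i) is
decreased by 1. -/
noncomputable def gammaMinus (γ : ℤ × ℤ → ℕ) (i : ℤ) : ℤ × ℤ → ℕ := fun p =>
  if p = (kMinus γ i, i) then γ p - 1
  else if kMinus γ i < i ∧ p = (kMinus γ i, i - 1) then γ p + 1
  else γ p

section Reduction

def reduceStep : Sign → ℕ × ℕ → ℕ × ℕ
  | Sign.minus, (a, b) => (a + 1, b)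
  | Sign.plus, (a, b) => if 0 < a then (a - 1, b) else (a, b + 1)

/-- The reduced word `−^a +^b` of `w`, recorded as the pair `(a, b)`. -/
def reducedCounts (w : List Sign) : ℕ × ℕ := w.foldr reduceStep (0, 0)

@[simp] lemma reducedCounts_nil : reducedCounts [] = (0, 0) := rfl

lemma reducedCounts_cons (s : Sign) (w : List Sign) :
    reducedCounts (s :: w) = reduceStep s (reducedCounts w) := rfl

lemma sigReduce_eq_replicate (w : List Sign) :
    sigReduce w = List.replicate (reducedCounts w).1 Sign.minus ++
      List.replicate (reducedCounts w).2 Sign.plus := by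
  induction w with
  | nil => rfl
  | cons s w ih =>
    rw [sigReduce, reducedCounts_cons, ih]
    obtain ⟨a, b⟩ := reducedCounts w
    cases s with
    | minus => simp [reduceStep, List.replicate_succ]
    | plus =>
      rcases a with _ | a
      · cases b <;> simp [reduceStep, List.replicate_succ]
      · simp [reduceStep, List.replicate_succ]

lemma count_minus_sigReduce (w : List Sign) :
    (sigReduce w).count Sign.minus = (reducedCounts w).1 := by
  simp [sigReduce_eq_replicate, List.count_replicate]

lemma count_plus_sigReduce (w : List Sign) :
    (sigReduce w).count Sign.plus = (reducedCounts w).2 := by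
  simp [sigReduce_eq_replicate, List.count_replicate]

/-- The '+' surviving in `u` cancel against the '−' surviving in `v`. -/
lemma reducedCounts_append (u v : List Sign) :
    reducedCounts (u ++ v) =
      ((reducedCounts u).1 + ((reducedCounts v).1 - (reducedCounts u).2),
        (reducedCounts v).2 + ((reducedCounts u).2 - (reducedCounts v).1)) := by
  induction u with
  | nil => simp
  | cons s u ih =>
    rw [List.cons_append, reducedCounts_cons, reducedCounts_cons, ih]
    obtain ⟨a, b⟩ := reducedCounts u
    cases s <;> simp only [reduceStep] <;> (try split_ifs) <;> ext <;> dsimp only <;> omega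

lemma reducedCounts_replicate (s : Sign) (m : ℕ) :
    reducedCounts (List.replicate m s) = if s = Sign.minus then (m, 0) else (0, m) := by
  induction m with
  | zero => cases s <;> rfl
  | succ m ih => cases s <;> simp_all [List.replicate_succ, reducedCounts_cons, reduceStep]

lemma reducedCounts_sigBlock (γ : ℤ × ℤ → ℕ) (i k : ℤ) :
    reducedCounts (sigBlock γ i k) = (γ (k, i), γ (k, i - 1)) := by
  simp [sigBlock, reducedCounts_append, reducedCounts_replicate]

end Reduction

section Signature

variable {γ δ : ℤ × ℤ → ℕ} {i k K : ℤ} {d : ℕ}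

/-- The coercion `ℕ → ℤ` in `sigSuffix` elaborates as a monadic bind over lists. -/
lemma sigSuffix_eq_flatten (γ : ℤ × ℤ → ℕ) (i k : ℤ) :
    sigSuffix γ i k =
      ((List.range (i + 1 - k).toNat).map fun j : ℕ => sigBlock γ i (k + j)).flatten := by
  simp only [sigSuffix, bind_pure_comp, List.map_eq_map, List.map_map]
  rfl

lemma sigPrefix_eq_flatten (γ : ℤ × ℤ → ℕ) (i k : ℤ) :
    sigPrefix γ i k =
      ((List.range (k - 1).toNat).map fun j : ℕ => sigBlock γ i (1 + j)).flatten := by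
  simp only [sigPrefix, bind_pure_comp, List.map_eq_map, List.map_map]
  rfl

lemma sigSuffix_of_lt (h : i < k) : sigSuffix γ i k = [] := by
  simp [sigSuffix_eq_flatten, show (i + 1 - k).toNat = 0 by omega]

lemma sigSuffix_of_le (h : k ≤ i) :
    sigSuffix γ i k = sigBlock γ i k ++ sigSuffix γ i (k + 1) := by
  rw [sigSuffix_eq_flatten, sigSuffix_eq_flatten,
    show (i + 1 - k).toNat = (i + 1 - (k + 1)).toNat + 1 by omega, List.range_succ_eq_map]
  simp only [List.map_cons, List.map_map, List.flatten_cons, Nat.cast_zero, add_zero]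
  congr 3
  ext j
  simp only [Function.comp_apply, Nat.cast_succ]
  ring_nf

lemma sigPrefix_one : sigPrefix γ i 1 = [] := by
  simp [sigPrefix_eq_flatten]

lemma sigPrefix_add_one (h : 1 ≤ k) :
    sigPrefix γ i (k + 1) = sigPrefix γ i k ++ sigBlock γ i k := by
  rw [sigPrefix_eq_flatten, sigPrefix_eq_flatten,
    show (k + 1 - 1).toNat = (k - 1).toNat + 1 by omega, List.range_succ]
  simp only [List.map_append, List.flatten_append, List.map_cons, List.map_nil,
    List.flatten_cons, List.flatten_nil, List.append_nil]
  congr 2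
  omega

lemma sigWord_eq_sigSuffix : sigWord γ i = sigSuffix γ i 1 := by
  simp [sigWord, sigSuffix]

def minusSuffix (γ : ℤ × ℤ → ℕ) (i k : ℤ) : ℕ := (reducedCounts (sigSuffix γ i k)).1

def plusPrefix (γ : ℤ × ℤ → ℕ) (i k : ℤ) : ℕ := (reducedCounts (sigPrefix γ i k)).2

lemma minusSuffix_of_lt (h : i < k) : minusSuffix γ i k = 0 := by
  simp [minusSuffix, sigSuffix_of_lt h]

lemma minusSuffix_of_le (h : k ≤ i) :
    minusSuffix γ i k = γ (k, i) + (minusSuffix γ i (k + 1) - γ (k, i - 1)) := by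
  simp [minusSuffix, sigSuffix_of_le h, reducedCounts_append, reducedCounts_sigBlock]

lemma plusPrefix_one : plusPrefix γ i 1 = 0 := by
  simp [plusPrefix, sigPrefix_one]

lemma plusPrefix_add_one (h : 1 ≤ k) :
    plusPrefix γ i (k + 1) = γ (k, i - 1) + (plusPrefix γ i k - γ (k, i)) := by
  simp [plusPrefix, sigPrefix_add_one h, reducedCounts_append, reducedCounts_sigBlock]

lemma aCount_eq_minusSuffix : aCount γ i = minusSuffix γ i 1 := by
  rw [aCount, count_minus_sigReduce, sigWord_eq_sigSuffix, minusSuffix]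

lemma plusPrefix_le_minusSuffix (hk : 1 ≤ k) (hki : k ≤ i + 1)
    (h : ∀ j, 1 ≤ j → j < k → γ (j, i - 1) ≤ minusSuffix γ i (j + 1)) :
    plusPrefix γ i k ≤ minusSuffix γ i k := by
  induction k, hk using Int.leInduction with
  | base => simp [plusPrefix_one]
  | succ k hk ih =>
    have hA := minusSuffix_of_le (γ := γ) (show k ≤ i by omega)
    have hB := plusPrefix_add_one (γ := γ) (i := i) hk
    have := h k hk (by omega)
    have := ih (by omega) fun j hj hjk => h j hj (by omega)
    omega

lemma minusSuffix_le_plusPrefix (hk : 1 ≤ k)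
    (h : ∀ j, k ≤ j → j ≤ i → γ (j, i) ≤ plusPrefix γ i j) :
    minusSuffix γ i k ≤ plusPrefix γ i k := by
  rcases lt_or_ge (i + 1) k with hik | hki
  · simp [minusSuffix_of_lt (show i < k by omega)]
  induction k, hki using Int.leInductionDown with
  | base => simp [minusSuffix_of_lt (show i < i + 1 by omega)]
  | pred k hki ih =>
    have hA := minusSuffix_of_le (γ := γ) (show k - 1 ≤ i by omega)
    have hB := plusPrefix_add_one (γ := γ) (i := i) hk
    rw [sub_add_cancel] at hA hB
    have := h (k - 1) le_rfl (by omega)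
    have := ih (by omega) fun j hj hji => h j (by omega) hji
    omega

lemma minusSuffix_lt_plusPrefix_of_le (hk : 1 ≤ k) (hkK : k ≤ K) (hK : K ≤ i + 1)
    (h : minusSuffix γ i k < plusPrefix γ i k) :
    minusSuffix γ i K < plusPrefix γ i K := by
  induction K, hkK using Int.leInduction with
  | base => exact h
  | succ K hkK ih =>
    have hA := minusSuffix_of_le (γ := γ) (show K ≤ i by omega)
    have hB := plusPrefix_add_one (γ := γ) (i := i) (show 1 ≤ K by omega)
    have := ih (by omega)
    omega

lemma plusPrefix_lt_minusSuffix_of_le (hk : 1 ≤ k) (hkK : k ≤ K) (hK : K ≤ i + 1)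
    (h : plusPrefix γ i K < minusSuffix γ i K) :
    plusPrefix γ i k < minusSuffix γ i k := by
  induction k, hkK using Int.leInductionDown with
  | base => exact h
  | pred k hkK ih =>
    have hA := minusSuffix_of_le (γ := γ) (show k - 1 ≤ i by omega)
    have hB := plusPrefix_add_one (γ := γ) (i := i) hk
    rw [sub_add_cancel] at hA hB
    have := ih (by omega)
    omega

/-- The step `x ↦ c + (x - e)` of the recurrence is monotone and `1`-Lipschitz. -/
lemma plusPrefix_le_add (hk : 1 ≤ k) (hkK : k ≤ K)
    (hγδ : ∀ p : ℤ × ℤ, k ≤ p.1 → p.1 < K → γ p = δ p)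
    (h : plusPrefix γ i k ≤ plusPrefix δ i k + d) :
    plusPrefix γ i K ≤ plusPrefix δ i K + d := by
  induction K, hkK using Int.leInduction with
  | base => exact h
  | succ K hkK ih =>
    have hγ := plusPrefix_add_one (γ := γ) (i := i) (show 1 ≤ K by omega)
    have hδ := plusPrefix_add_one (γ := δ) (i := i) (show 1 ≤ K by omega)
    rw [hγδ (K, i) hkK (by simp), hγδ (K, i - 1) hkK (by simp)] at hγ
    have := ih fun p hp hpK => hγδ p hp (by omega)
    omega

lemma minusSuffix_le_add (hkK : k ≤ K) (hK : K ≤ i + 1)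
    (hγδ : ∀ p : ℤ × ℤ, k ≤ p.1 → p.1 < K → γ p = δ p)
    (h : minusSuffix γ i K ≤ minusSuffix δ i K + d) :
    minusSuffix γ i k ≤ minusSuffix δ i k + d := by
  induction k, hkK using Int.leInductionDown with
  | base => exact h
  | pred k hkK ih =>
    have hγ := minusSuffix_of_le (γ := γ) (show k - 1 ≤ i by omega)
    have hδ := minusSuffix_of_le (γ := δ) (show k - 1 ≤ i by omega)
    rw [sub_add_cancel, hγδ (k - 1, i) le_rfl (by simp; omega),
      hγδ (k - 1, i - 1) le_rfl (by simp; omega)] at hγ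
    rw [sub_add_cancel] at hδ
    have := ih fun p hp hpK => hγδ p (by omega) hpK
    omega

lemma plusPrefix_congr (hk : 1 ≤ k) (hγδ : ∀ p : ℤ × ℤ, 1 ≤ p.1 → p.1 < k → γ p = δ p) :
    plusPrefix γ i k = plusPrefix δ i k :=
  le_antisymm
    (plusPrefix_le_add (d := 0) le_rfl hk hγδ (by simp [plusPrefix_one]))
    (plusPrefix_le_add (d := 0) le_rfl hk (fun p hp hpk => (hγδ p hp hpk).symm)
      (by simp [plusPrefix_one]))

lemma minusSuffix_congr (hk : k ≤ i + 1)
    (hγδ : ∀ p : ℤ × ℤ, k ≤ p.1 → p.1 < i + 1 → γ p = δ p) :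
    minusSuffix γ i k = minusSuffix δ i k :=
  le_antisymm
    (minusSuffix_le_add (d := 0) hk le_rfl hγδ (by simp [minusSuffix_of_lt]))
    (minusSuffix_le_add (d := 0) hk le_rfl (fun p hp hpk => (hγδ p hp hpk).symm)
      (by simp [minusSuffix_of_lt]))

end Signature

section Index

variable {γ : ℤ × ℤ → ℕ} {i k l : ℤ}

/-- `k` is the row `k'` of the definition of `γ^{i,+}`. -/
structure IsPlusIndex (γ : ℤ × ℤ → ℕ) (i k : ℤ) : Prop where
  one_le : 1 ≤ k
  le : k ≤ i
  survives : k < i → minusSuffix γ i (k + 1) < γ (k, i - 1)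
  cancelled : ∀ j, 1 ≤ j → j < k → γ (j, i - 1) ≤ minusSuffix γ i (j + 1)

/-- `k` is the row `k''` of the definition of `γ^{i,−}`. -/
structure IsMinusIndex (γ : ℤ × ℤ → ℕ) (i k : ℤ) : Prop where
  one_le : 1 ≤ k
  le : k ≤ i
  survives : plusPrefix γ i k < γ (k, i)
  cancelled : ∀ j, k < j → j ≤ i → γ (j, i) ≤ plusPrefix γ i j

lemma IsPlusIndex.eq (hk : IsPlusIndex γ i k) (hl : IsPlusIndex γ i l) : k = l := by
  by_contra hne
  rcases lt_or_gt_of_ne hne with hkl | hlk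
  · exact (hk.survives (by linarith [hl.le])).not_ge (hl.cancelled k hk.one_le hkl)
  · exact (hl.survives (by linarith [hk.le])).not_ge (hk.cancelled l hl.one_le hlk)

lemma IsMinusIndex.eq (hk : IsMinusIndex γ i k) (hl : IsMinusIndex γ i l) : k = l := by
  by_contra hne
  rcases lt_or_gt_of_ne hne with hkl | hlk
  · exact hl.survives.not_ge (hk.cancelled l hkl hl.le)
  · exact hk.survives.not_ge (hl.cancelled k hlk hk.le)

lemma isPlusIndex_kPlus (hi : 1 ≤ i) : IsPlusIndex γ i (kPlus γ i) := by
  set S := (Finset.Icc 1 (i - 1)).filter fun k =>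
    (sigReduce (sigSuffix γ i (k + 1))).count Sign.minus < γ (k, i - 1)
  have hmem : ∀ {j}, j ∈ S ↔ (1 ≤ j ∧ j ≤ i - 1) ∧ minusSuffix γ i (j + 1) < γ (j, i - 1) := by
    simp [S, count_minus_sigReduce, minusSuffix]
  by_cases hS : S.Nonempty
  · have hkPlus : kPlus γ i = S.min' hS := by
      simp only [kPlus, S, dif_pos hS]
    obtain ⟨⟨h1, h2⟩, h3⟩ := hmem.1 (S.min'_mem hS)
    rw [hkPlus]
    refine ⟨h1, by omega, fun _ => h3, fun j hj hjk => ?_⟩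
    by_contra! hlt
    exact (S.min'_le j (hmem.2 ⟨⟨hj, by omega⟩, hlt⟩)).not_gt hjk
  · have hkPlus : kPlus γ i = i := by
      simp only [kPlus, S, dif_neg hS]
    rw [hkPlus]
    refine ⟨hi, le_rfl, fun h => absurd h (lt_irrefl i), fun j hj hji => ?_⟩
    by_contra! hlt
    exact hS ⟨j, hmem.2 ⟨⟨hj, by omega⟩, hlt⟩⟩

lemma isMinusIndex_kMinus (h : ∃ k, 1 ≤ k ∧ k ≤ i ∧ plusPrefix γ i k < γ (k, i)) :
    IsMinusIndex γ i (kMinus γ i) := by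
  set S := (Finset.Icc 1 i).filter fun k =>
    (sigReduce (sigPrefix γ i k)).count Sign.plus < γ (k, i)
  have hmem : ∀ {j}, j ∈ S ↔ (1 ≤ j ∧ j ≤ i) ∧ plusPrefix γ i j < γ (j, i) := by
    simp [S, count_plus_sigReduce, plusPrefix]
  obtain ⟨k, hk1, hki, hk⟩ := h
  have hS : S.Nonempty := ⟨k, hmem.2 ⟨⟨hk1, hki⟩, hk⟩⟩
  have hkMinus : kMinus γ i = S.max' hS := by
    simp only [kMinus, S, dif_pos hS]
  obtain ⟨⟨h1, h2⟩, h3⟩ := hmem.1 (S.max'_mem hS)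
  rw [hkMinus]
  refine ⟨h1, h2, h3, fun j hkj hji => ?_⟩
  by_contra! hlt
  exact (S.le_max' j (hmem.2 ⟨⟨by omega, hji⟩, hlt⟩)).not_gt hkj

lemma kPlus_eq (hk : IsPlusIndex γ i k) : kPlus γ i = k :=
  (isPlusIndex_kPlus (hk.one_le.trans hk.le)).eq hk

lemma kMinus_eq (hk : IsMinusIndex γ i k) : kMinus γ i = k :=
  (isMinusIndex_kMinus ⟨k, hk.one_le, hk.le, hk.survives⟩).eq hk

lemma exists_plusPrefix_lt_of_aCount_pos (ha : 0 < aCount γ i) :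
    ∃ k, 1 ≤ k ∧ k ≤ i ∧ plusPrefix γ i k < γ (k, i) := by
  by_contra! h
  have := minusSuffix_le_plusPrefix le_rfl fun j hj hji => h j hj hji
  rw [plusPrefix_one, ← aCount_eq_minusSuffix] at this
  omega

lemma IsPlusIndex.minusSuffix_eq (hk : IsPlusIndex γ i k) : minusSuffix γ i k = γ (k, i) := by
  rw [minusSuffix_of_le hk.le]
  rcases hk.le.lt_or_eq with hki | rfl
  · have := hk.survives hki
    omega
  · simp [minusSuffix_of_lt]

lemma IsPlusIndex.plusPrefix_le (hk : IsPlusIndex γ i k) : plusPrefix γ i k ≤ γ (k, i) :=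
  hk.minusSuffix_eq ▸ plusPrefix_le_minusSuffix hk.one_le (by linarith [hk.le]) hk.cancelled

lemma IsMinusIndex.plusPrefix_add_one_eq (hk : IsMinusIndex γ i k) :
    plusPrefix γ i (k + 1) = γ (k, i - 1) := by
  have := hk.survives
  rw [plusPrefix_add_one hk.one_le]
  omega

lemma IsMinusIndex.minusSuffix_add_one_le (hk : IsMinusIndex γ i k) :
    minusSuffix γ i (k + 1) ≤ γ (k, i - 1) :=
  hk.plusPrefix_add_one_eq ▸ minusSuffix_le_plusPrefix (by linarith [hk.one_le])
    fun j hkj hji => hk.cancelled j (by omega) hji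

end Index

section Operators

variable {γ : ℤ × ℤ → ℕ} {i : ℤ}

lemma gammaPlus_apply_of_fst_ne {p : ℤ × ℤ} (hp : p.1 ≠ kPlus γ i) : gammaPlus γ i p = γ p := by
  obtain ⟨a, b⟩ := p
  simp_all [gammaPlus]

lemma gammaPlus_apply_self : gammaPlus γ i (kPlus γ i, i) = γ (kPlus γ i, i) + 1 := by
  simp [gammaPlus]

lemma gammaPlus_apply_sub_one (h : kPlus γ i < i) :
    gammaPlus γ i (kPlus γ i, i - 1) = γ (kPlus γ i, i - 1) - 1 := by
  simp [gammaPlus, h]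

lemma gammaMinus_apply_of_fst_ne {p : ℤ × ℤ} (hp : p.1 ≠ kMinus γ i) :
    gammaMinus γ i p = γ p := by
  obtain ⟨a, b⟩ := p
  simp_all [gammaMinus]

lemma gammaMinus_apply_self : gammaMinus γ i (kMinus γ i, i) = γ (kMinus γ i, i) - 1 := by
  simp [gammaMinus]

lemma gammaMinus_apply_sub_one (h : kMinus γ i < i) :
    gammaMinus γ i (kMinus γ i, i - 1) = γ (kMinus γ i, i - 1) + 1 := by
  simp [gammaMinus, h]

lemma gammaMinus_gammaPlus_of_kMinus_eq (hk : kMinus (gammaPlus γ i) i = kPlus γ i)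
    (hpos : kPlus γ i < i → 0 < γ (kPlus γ i, i - 1)) :
    gammaMinus (gammaPlus γ i) i = γ := by
  funext p
  unfold gammaMinus
  rw [hk]
  unfold gammaPlus
  split_ifs <;> simp_all
  omega

lemma gammaPlus_gammaMinus_of_kPlus_eq (hk : kPlus (gammaMinus γ i) i = kMinus γ i)
    (hpos : 0 < γ (kMinus γ i, i)) :
    gammaPlus (gammaMinus γ i) i = γ := by
  funext p
  unfold gammaPlus
  rw [hk]
  unfold gammaMinus
  split_ifs <;> simp_all
  omega

lemma kMinus_gammaPlus (hi : 1 ≤ i) : kMinus (gammaPlus γ i) i = kPlus γ i := by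
  set k := kPlus γ i
  set δ := gammaPlus γ i
  have hk : IsPlusIndex γ i k := isPlusIndex_kPlus hi
  have hδ : ∀ p : ℤ × ℤ, p.1 ≠ k → δ p = γ p := fun p hp => gammaPlus_apply_of_fst_ne hp
  have hδk : δ (k, i) = γ (k, i) + 1 := gammaPlus_apply_self
  have hδk' : k < i → δ (k, i - 1) = γ (k, i - 1) - 1 := gammaPlus_apply_sub_one
  have hk1 := hk.one_le
  have hBk : plusPrefix δ i k = plusPrefix γ i k :=
    plusPrefix_congr hk.one_le fun p _ hp => hδ p hp.ne
  have hBγk := hk.plusPrefix_le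
  apply kMinus_eq
  refine ⟨hk.one_le, hk.le, by omega, fun j hkj hji => ?_⟩
  have hki : k < i := by omega
  have hsurv := hk.survives hki
  have hBγ : plusPrefix γ i (k + 1) = γ (k, i - 1) := by
    rw [plusPrefix_add_one hk.one_le]
    omega
  have hBδ : plusPrefix δ i (k + 1) + 1 = γ (k, i - 1) := by
    rw [plusPrefix_add_one hk1, hδk, hδk' hki, hBk]
    omega
  have hAB : minusSuffix γ i j < plusPrefix γ i j :=
    minusSuffix_lt_plusPrefix_of_le (k := k + 1) (by omega) hkj (by omega) (by omega)
  have hBj : plusPrefix γ i j ≤ plusPrefix δ i j + 1 :=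
    plusPrefix_le_add (k := k + 1) (by omega) hkj (fun p hp _ => (hδ p (by omega)).symm)
      (by omega)
  have hAj := minusSuffix_of_le (γ := γ) hji
  rw [hδ (j, i) (by simp; omega)]
  omega

lemma kPlus_gammaMinus (ha : 0 < aCount γ i) : kPlus (gammaMinus γ i) i = kMinus γ i := by
  set k := kMinus γ i
  set δ := gammaMinus γ i
  have hk : IsMinusIndex γ i k := isMinusIndex_kMinus (exists_plusPrefix_lt_of_aCount_pos ha)
  have hδ : ∀ p : ℤ × ℤ, p.1 ≠ k → δ p = γ p := fun p hp => gammaMinus_apply_of_fst_ne hp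
  have hδk : δ (k, i) = γ (k, i) - 1 := gammaMinus_apply_self
  have hδk' : k < i → δ (k, i - 1) = γ (k, i - 1) + 1 := gammaMinus_apply_sub_one
  have hk1 := hk.one_le
  have hki := hk.le
  have hAk : minusSuffix δ i (k + 1) = minusSuffix γ i (k + 1) :=
    minusSuffix_congr (by linarith [hk.le]) fun p hp _ => hδ p (by omega)
  have hAγk := hk.minusSuffix_add_one_le
  have hsurv := hk.survives
  apply kPlus_eq
  refine ⟨hk1, hki, fun hki => ?_, fun j hj hjk => ?_⟩
  · rw [hAk, hδk' hki]
    omega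
  have hAγ : minusSuffix γ i k = γ (k, i) := by
    rw [minusSuffix_of_le hk.le]
    omega
  have hAδ : γ (k, i) ≤ minusSuffix δ i k + 1 := by
    rw [minusSuffix_of_le hk.le, hδk]
    omega
  have hBA : plusPrefix γ i (j + 1) < minusSuffix γ i (j + 1) :=
    plusPrefix_lt_minusSuffix_of_le (K := k) (by omega) (by omega) (by linarith [hk.le])
      (by omega)
  have hAj : minusSuffix γ i (j + 1) ≤ minusSuffix δ i (j + 1) + 1 :=
    minusSuffix_le_add (K := k) (by omega) (by linarith [hk.le])
      (fun p _ hp => (hδ p hp.ne).symm) (by omega)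
  have hBj := plusPrefix_add_one (γ := γ) (i := i) hj
  rw [hδ (j, i - 1) (by simp; omega)]
  omega

theorem gammaMinus_gammaPlus (hi : 1 ≤ i) : gammaMinus (gammaPlus γ i) i = γ :=
  gammaMinus_gammaPlus_of_kMinus_eq (kMinus_gammaPlus hi) fun hki =>
    ((isPlusIndex_kPlus hi).survives hki).trans_le' (Nat.zero_le _)

theorem gammaPlus_gammaMinus (ha : 0 < aCount γ i) : gammaPlus (gammaMinus γ i) i = γ :=
  gammaPlus_gammaMinus_of_kPlus_eq (kPlus_gammaMinus ha)
    ((isMinusIndex_kMinus (exists_plusPrefix_lt_of_aCount_pos ha)).survives.trans_le'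
      (Nat.zero_le _))

end Operators

theorem stmt16_general (i : ℤ) (hi1 : 1 ≤ i)
    (γ : ℤ × ℤ → ℕ) :
    gammaMinus (gammaPlus γ i) i = γ ∧
    (0 < aCount γ i → gammaPlus (gammaMinus γ i) i = γ) :=
  ⟨gammaMinus_gammaPlus hi1, gammaPlus_gammaMinus⟩

theorem stmt16 (n i : ℤ) (hn : 1 ≤ n) (hi1 : 1 ≤ i) (hin : i ≤ n)
    (γ : ℤ × ℤ → ℕ)
    (hsupp : ∀ p : ℤ × ℤ, γ p ≠ 0 → 1 ≤ p.1 ∧ p.1 ≤ p.2 ∧ p.2 ≤ n) :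
    gammaMinus (gammaPlus γ i) i = γ ∧
    (0 < aCount γ i → gammaPlus (gammaMinus γ i) i = γ) :=
  stmt16_general i hi1 γ
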